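/- If I is a trace ideal of a commutative Noetherian ring R, then the integral closure of I is also a trace ideal. Specifically, for every R-linear map ψ from the integral closure of I to R and every x integral over I, ψ(x) is integral over I. -/
import Mathlib


/-- The trace ideal of an `R`-module `M`. -/
noncomputable def traceIdeal (R : Type*) [CommRing R] (M : Type*) [AddCommGroup M]
    [Module R M] : Ideal R :=
  ⨆ f : M →ₗ[R] R, LinearMap.range f

/-- `x` is integral over the ideal `I`: there is an equation
`xⁿ + a₁xⁿ⁻¹ + ⋯ + aₙ = 0` with `aⱼ ∈ Iʲ` and `n ≥ 1`. -/
def IsIntegralOverIdeal {R : Type*} [CommRing R] (I : Ideal R) (x : R) : Prop :=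
  ∃ (n : ℕ) (a : ℕ → R), 1 ≤ n ∧ (∀ j, 1 ≤ j → j ≤ n → a j ∈ I ^ j) ∧
    x ^ n + ∑ j ∈ Finset.Icc 1 n, a j * x ^ (n - j) = 0

-- basic: members of I are integral over I
lemma mem_isIntegralOverIdeal {R : Type*} [CommRing R] (I : Ideal R) {y : R}
    (hy : y ∈ I) : IsIntegralOverIdeal I y := by
  refine ⟨1, fun _ => -y, le_refl 1, ?_, ?_⟩
  · intro j h1 h2
    have : j = 1 := le_antisymm h2 h1
    subst this
    simpa using I.neg_mem hy
  · simp

lemma aux_psi_integral {R : Type*} [CommRing R]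
    (I : Ideal R) (htrace : traceIdeal R I = I)
    (Ibar : Ideal R) (hbar : ∀ x : R, x ∈ Ibar ↔ IsIntegralOverIdeal I x)
    (ψ : Ibar →ₗ[R] R) (x : Ibar) : IsIntegralOverIdeal I (ψ x) := by
  have hIle : I ≤ Ibar := fun y hy => (hbar y).mpr (mem_isIntegralOverIdeal I hy)
  -- ψ maps I into I
  have hψI : ∀ (e : R) (he : e ∈ I) (h : e ∈ Ibar), ψ ⟨e, h⟩ ∈ I := by
    intro e he h
    have hr : LinearMap.range (ψ.comp (Submodule.inclusion hIle)) ≤ traceIdeal R I :=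
      le_iSup (fun f : I →ₗ[R] R => LinearMap.range f) _
    have h2 : ψ ⟨e, h⟩ = (ψ.comp (Submodule.inclusion hIle)) ⟨e, he⟩ := rfl
    rw [h2]
    exact (hr.trans htrace.le) ⟨⟨e, he⟩, rfl⟩
  -- ψ maps I^j into I^j for j ≥ 1
  have hψpow : ∀ (j : ℕ), 1 ≤ j → ∀ (e : R), e ∈ I ^ j → ∀ (h : e ∈ Ibar),
      ψ ⟨e, h⟩ ∈ I ^ j := by
    intro j hj e he h
    obtain ⟨j', rfl⟩ : ∃ j', j = j' + 1 := ⟨j - 1, (Nat.succ_pred_eq_of_pos hj).symm⟩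
    rw [pow_succ] at he ⊢
    have key : e ∈ Ibar ∧ ∀ h : e ∈ Ibar, ψ ⟨e, h⟩ ∈ I ^ j' * I := by
      refine Submodule.mul_induction_on he ?_ ?_
      · intro m hm n hn
        have hnIbar : n ∈ Ibar := hIle hn
        refine ⟨Ibar.mul_mem_left m hnIbar, fun h' => ?_⟩
        have hmk : (⟨m * n, h'⟩ : Ibar) = m • (⟨n, hnIbar⟩ : Ibar) := Subtype.ext (by simp)
        rw [hmk, map_smul, smul_eq_mul]
        exact Submodule.mul_mem_mul hm (hψI n hn hnIbar)
      · intro y z hy hz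
        refine ⟨Ibar.add_mem hy.1 hz.1, fun h' => ?_⟩
        have hmk : (⟨y + z, h'⟩ : Ibar) = (⟨y, hy.1⟩ : Ibar) + ⟨z, hz.1⟩ := Subtype.ext rfl
        rw [hmk, map_add]
        exact (I ^ j' * I).add_mem (hy.2 _) (hz.2 _)
    exact key.2 h
  obtain ⟨n, a, hn, ha, heq⟩ := (hbar (x : R)).mp x.2
  set A : ℕ → R := fun j => if j = 0 then 1 else a j with hA
  -- main induction
  have claim : ∀ k, k ≤ n → ∃ c : ℕ → R, (∀ m, m < k → c m ∈ I ^ (n - m)) ∧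
      ψ x ^ k * (∑ j ∈ Finset.range (n - k + 1), A j * (x : R) ^ (n - k - j))
        + ∑ m ∈ Finset.range k, c m * ψ x ^ m = 0 := by
    intro k
    induction k with
    | zero =>
      intro _
      refine ⟨0, by simp, ?_⟩
      simp only [pow_zero, one_mul, Finset.range_zero, Finset.sum_empty, add_zero,
        Nat.sub_zero]
      rw [Finset.sum_range_succ']
      have h1 : ∑ i ∈ Finset.range n, A (i + 1) * (x : R) ^ (n - (i + 1))
          = ∑ j ∈ Finset.Icc 1 n, a j * (x : R) ^ (n - j) := by
        rw [← Finset.Ico_add_one_right_eq_Icc, Finset.sum_Ico_eq_sum_range]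
        refine Finset.sum_congr (by norm_num) fun i hi => ?_
        simp [hA, Nat.add_comm 1 i]
      rw [h1]
      have h0 : A 0 * (x : R) ^ (n - 0) = (x : R) ^ n := by simp [hA]
      rw [h0, add_comm]
      exact heq
    | succ k ih =>
      intro hk1
      have hkn : k < n := hk1
      obtain ⟨c, hc, hEq⟩ := ih (Nat.le_of_succ_le hk1)
      set S' : R := ∑ j ∈ Finset.range (n - (k + 1) + 1), A j * (x : R) ^ (n - (k + 1) - j)
        with hS'
      -- split S_k
      have hSk : (∑ j ∈ Finset.range (n - k + 1), A j * (x : R) ^ (n - k - j))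
          = (x : R) * S' + A (n - k) := by
        have hnk : n - (k + 1) + 1 = n - k := by omega
        rw [hS', hnk, Finset.sum_range_succ, Finset.mul_sum]
        have hlast : A (n - k) * (x : R) ^ (n - k - (n - k)) = A (n - k) := by simp
        rw [hlast]
        congr 1
        refine Finset.sum_congr rfl fun j hj => ?_
        rw [Finset.mem_range] at hj
        have hp : n - k - j = (n - (k + 1) - j) + 1 := by omega
        rw [hp, pow_succ]
        ring
      rw [hSk] at hEq
      -- membership data
      have hankI : a (n - k) ∈ I ^ (n - k) := ha (n - k) (by omega) (by omega)
      have hankIbar : a (n - k) ∈ Ibar := hIle (Ideal.pow_le_self (by omega) hankI)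
      set zA : Ibar := ⟨a (n - k), hankIbar⟩ with hzA
      set c' : ℕ → Ibar := fun m =>
        if h : m < k then ⟨c m, hIle (Ideal.pow_le_self (by omega) (hc m h))⟩ else 0
        with hc'def
      set z : Ibar := (ψ x ^ k * S') • x with hzdef
      have hAnk : A (n - k) = a (n - k) := if_neg (by omega)
      have hz2 : z = -((ψ x ^ k) • zA + ∑ m ∈ Finset.range k, (ψ x ^ m) • c' m) := by
        apply Subtype.ext
        push_cast
        have hcoez : (z : R) = (ψ x ^ k * S') * (x : R) := rfl
        have hsum2 : ∑ m ∈ Finset.range k, ψ x ^ m • ((c' m : Ibar) : R)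
            = ∑ m ∈ Finset.range k, c m * ψ x ^ m := by
          refine Finset.sum_congr rfl fun m hm => ?_
          rw [Finset.mem_range] at hm
          simp only [hc'def, dif_pos hm, smul_eq_mul]
          ring
        rw [hcoez, hsum2]
        simp only [smul_eq_mul]
        rw [hAnk] at hEq
        linear_combination hEq
      -- apply ψ
      have hψz1 : ψ z = ψ x ^ (k + 1) * S' := by
        rw [hzdef, map_smul, smul_eq_mul]; ring
      have hψz2 : ψ z = -((ψ zA) * ψ x ^ k + ∑ m ∈ Finset.range k, ψ (c' m) * ψ x ^ m) := by
        rw [hz2]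
        simp only [map_neg, map_add, map_smul, smul_eq_mul, map_sum]
        have hcomm : ∑ m ∈ Finset.range k, ψ x ^ m * ψ (c' m)
            = ∑ m ∈ Finset.range k, ψ (c' m) * ψ x ^ m :=
          Finset.sum_congr rfl fun m _ => mul_comm _ _
        rw [hcomm, mul_comm (ψ x ^ k) (ψ zA)]
      -- new coefficients
      refine ⟨fun m => if m = k then ψ zA else ψ (c' m), ?_, ?_⟩
      · intro m hm
        by_cases hmk : m = k
        · subst hmk
          simp only [if_pos rfl]
          exact hψpow (n - m) (by omega) _ hankI _
        · have hmlt : m < k := by omega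
          simp only [if_neg hmk]
          have : c' m = ⟨c m, hIle (Ideal.pow_le_self (by omega) (hc m hmlt))⟩ :=
            dif_pos hmlt
          rw [this]
          exact hψpow (n - m) (by omega) _ (hc m hmlt) _
      · rw [Finset.sum_range_succ]
        beta_reduce
        have hifk : (if k = k then ψ zA else ψ (c' k)) = ψ zA := if_pos rfl
        rw [hifk]
        have hrest : ∑ m ∈ Finset.range k, (if m = k then ψ zA else ψ (c' m)) * ψ x ^ m
            = ∑ m ∈ Finset.range k, ψ (c' m) * ψ x ^ m := by
          refine Finset.sum_congr rfl fun m hm => ?_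
          rw [Finset.mem_range] at hm
          rw [if_neg (by omega)]
        rw [hrest]
        have hfin := hψz1.symm.trans hψz2
        linear_combination hfin
  -- conclude with k = n
  obtain ⟨c, hc, hEq⟩ := claim n le_rfl
  have hSn : (∑ j ∈ Finset.range (n - n + 1), A j * (x : R) ^ (n - n - j)) = 1 := by
    simp [hA]
  rw [hSn, mul_one] at hEq
  refine ⟨n, fun j => c (n - j), hn, ?_, ?_⟩
  · intro j h1 h2
    have := hc (n - j) (by omega)
    have hj : n - (n - j) = j := by omega
    rwa [hj] at this
  · have hsum : ∑ j ∈ Finset.Icc 1 n, c (n - j) * ψ x ^ (n - j)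
        = ∑ m ∈ Finset.range n, c m * ψ x ^ m := by
      rw [← Finset.Ico_add_one_right_eq_Icc, Finset.sum_Ico_eq_sum_range]
      have hcard : n + 1 - 1 = n := by omega
      rw [hcard]
      rw [← Finset.sum_range_reflect (fun m => c m * ψ x ^ m) n]
      refine Finset.sum_congr rfl fun i hi => ?_
      have : n - (1 + i) = n - 1 - i := by omega
      rw [this]
    rw [hsum]
    exact hEq

/-- If `I` is a trace ideal of a commutative Noetherian ring `R` then its
integral closure `Ī` is again a trace ideal; indeed for every `R`-linear map
`ψ : Ī → R` and every `x ∈ Ī`, the element `ψ(x)` is integral over `I`. -/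
theorem integralClosure_trace (R : Type*) [CommRing R] [IsNoetherianRing R]
    (I : Ideal R) (htrace : traceIdeal R I = I)
    (Ibar : Ideal R) (hbar : ∀ x : R, x ∈ Ibar ↔ IsIntegralOverIdeal I x) :
    (∀ (ψ : Ibar →ₗ[R] R) (x : Ibar), IsIntegralOverIdeal I (ψ x)) ∧
      traceIdeal R Ibar = Ibar := by
  have h1 : ∀ (ψ : Ibar →ₗ[R] R) (x : Ibar), IsIntegralOverIdeal I (ψ x) :=
    fun ψ x => aux_psi_integral I htrace Ibar hbar ψ x
  refine ⟨h1, le_antisymm ?_ ?_⟩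
  · refine iSup_le fun ψ => ?_
    rintro _ ⟨x, rfl⟩
    exact (hbar _).mpr (h1 ψ x)
  · intro y hy
    have : y ∈ LinearMap.range (Submodule.subtype Ibar) := ⟨⟨y, hy⟩, rfl⟩
    exact le_iSup (fun f : Ibar →ₗ[R] R => LinearMap.range f) (Submodule.subtype Ibar) this
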